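/- arXiv:2105.00975 — 6 statements merged into one kernel-verified Lean document; each statement's English description precedes it below -/
import Mathlib

section
/- Let v_1, ..., v_k be unit vectors in ℂ^d that are equiangular with common angle β, and suppose β < 1 (i.e. the vectors are pairwise non-parallel). Then the rank-one orthogonal projections v_1v_1*, ..., v_kv_k* are linearly independent in M_d(ℂ). -/
/-!
If `∑ i, g i • v i (v i)* = 0`, sandwiching with `v j` gives `∑ i, g i |⟨v i, v j⟩|² = 0`, that is
`(1 - β²) g j + β² ∑ i, g i = 0` for every `j`. Summing over `j` forces `∑ i, g i = 0`, and then
`β² < 1` forces `g j = 0`.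
-/

open Matrix

section

variable {𝕜 : Type*} [RCLike 𝕜] {n ι : Type*} [Fintype n] [Fintype ι]

theorem star_dotProduct_vecMulVec_star_mulVec (u w : n → 𝕜) :
    star w ⬝ᵥ (vecMulVec u (star u) *ᵥ w) = (‖star u ⬝ᵥ w‖ ^ 2 : ℝ) := by
  rw [vecMulVec_mulVec, op_smul_eq_smul, dotProduct_smul,
    smul_eq_mul, star_dotProduct w u, RCLike.star_def, RCLike.mul_conj]
  norm_cast

theorem eq_zero_of_one_sub_mul_add_mul_sum_eq_zero {c : ℝ} (hc₀ : 0 ≤ c) (hc₁ : c < 1)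
    {g : ι → 𝕜} (h : ∀ j, (1 - c : 𝕜) * g j + c * ∑ i, g i = 0) : g = 0 := by
  have hsum : ((1 - c + Fintype.card ι * c : ℝ) : 𝕜) * ∑ i, g i = 0 := by
    have := Finset.sum_eq_zero (s := Finset.univ) fun j _ => h j
    rw [Finset.sum_add_distrib, ← Finset.mul_sum, Finset.sum_const, Finset.card_univ,
      nsmul_eq_mul] at this
    push_cast
    linear_combination this
  have hpos : (1 - c + Fintype.card ι * c : ℝ) ≠ 0 := by positivity
  have hS : ∑ i, g i = 0 := (mul_eq_zero.1 hsum).resolve_left (by exact_mod_cast hpos)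
  funext j
  have hne : (1 - c : 𝕜) ≠ 0 := by exact_mod_cast (sub_pos.2 hc₁).ne'
  simpa [hS, hne] using h j

theorem linearIndependent_vecMulVec_star_of_sq_norm_eq {v : ι → n → 𝕜}
    (hunit : ∀ i, star (v i) ⬝ᵥ v i = 1) {c : ℝ} (hc₀ : 0 ≤ c) (hc₁ : c < 1)
    (hang : ∀ i j, i ≠ j → ‖star (v i) ⬝ᵥ v j‖ ^ 2 = c) :
    LinearIndependent 𝕜 fun i => vecMulVec (v i) (star (v i)) := by
  classical
  rw [Fintype.linearIndependent_iff]
  intro g hg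
  refine congrFun (eq_zero_of_one_sub_mul_add_mul_sum_eq_zero hc₀ hc₁ fun j => ?_)
  have hj := congrArg (fun M => star (v j) ⬝ᵥ (M *ᵥ v j)) hg
  simp only [sum_mulVec, smul_mulVec, dotProduct_sum, dotProduct_smul,
    star_dotProduct_vecMulVec_star_mulVec, zero_mulVec, dotProduct_zero] at hj
  have hweight : ∀ i, ((‖star (v i) ⬝ᵥ v j‖ ^ 2 : ℝ) : 𝕜) =
      (c : 𝕜) + if i = j then (1 - c : 𝕜) else 0 := by
    intro i
    split_ifs with hij
    · rw [hij, hunit, norm_one]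
      push_cast
      ring
    · rw [hang i j hij, add_zero]
  simp only [hweight, smul_eq_mul, mul_add, Finset.sum_add_distrib, mul_ite, mul_zero,
    Finset.sum_ite_eq', Finset.mem_univ, if_true, ← Finset.sum_mul] at hj
  linear_combination hj

end

/-- Equiangular unit vectors in ℂ^d with common angle β < 1 yield
linearly independent rank-one projections v_i v_i*. -/
theorem equiangular_lines_proj_linearIndependent
    {d k : ℕ} (v : Fin k → (Fin d → ℂ)) (β : ℝ)
    (hunit : ∀ i, (star (v i)) ⬝ᵥ v i = 1)
    (hang : ∀ i j, i ≠ j → ‖(star (v i)) ⬝ᵥ v j‖ = β)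
    (hβ : β < 1) :
    LinearIndependent ℂ (fun i => Matrix.vecMulVec (v i) (star (v i))) := by
  -- `max β 0` rather than `β`: for `k ≤ 1` nothing prevents `β < 0`.
  refine linearIndependent_vecMulVec_star_of_sq_norm_eq hunit (c := max β 0 ^ 2) (by positivity)
    ?_ fun i j hij => ?_
  · have : max β 0 < 1 := max_lt hβ one_pos
    nlinarith [le_max_right β 0]
  · have hβ₀ : 0 ≤ β := hang i j hij ▸ norm_nonneg _
    rw [hang i j hij, max_eq_left hβ₀]
end

section
/- Let v_1, ..., v_k be unit vectors in ℝ^d that are equiangular with common angle β, and suppose β < 1. Then k ≤ d(d+1)/2. -/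
/-!
The matrix `(⟨v_i, v_j⟩²)` equals `(1 - β²) I + β² J`, which is positive definite for `β < 1`.
It is also the Gram matrix of the rank-one matrices `v_i v_iᵀ` under the trace pairing
`⟨M, yyᵀ⟩ = yᵀ M y`, so these are linearly independent in the space of symmetric `d × d`
matrices, of dimension `d(d+1)/2`.
-/

open Matrix

namespace Sym2

variable {ι κ R : Type*} [CommRing R]

/-- Functions on `Sym2 ι` model symmetric `ι × ι` matrices; `outerSelf x` is `x xᵀ`. -/
def outerSelf (x : ι → R) : Sym2 ι → R :=
  Sym2.lift ⟨fun a b => x a * x b, fun _ _ => mul_comm _ _⟩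

@[simp]
theorem outerSelf_mk (x : ι → R) (a b : ι) : outerSelf x s(a, b) = x a * x b := rfl

variable [Fintype ι]

def quadEval (y : ι → R) : (Sym2 ι → R) →ₗ[R] R where
  toFun g := ∑ a, ∑ b, y a * y b * g s(a, b)
  map_add' g h := by simp only [Pi.add_apply, mul_add, Finset.sum_add_distrib]
  map_smul' c g := by
    simp only [Pi.smul_apply, smul_eq_mul, Finset.mul_sum, RingHom.id_apply]
    exact Finset.sum_congr rfl fun _ _ => Finset.sum_congr rfl fun _ _ => by ring

theorem quadEval_outerSelf (x y : ι → R) : quadEval y (outerSelf x) = (x ⬝ᵥ y) ^ 2 := by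
  simp only [quadEval, LinearMap.coe_mk, AddHom.coe_mk, outerSelf_mk, dotProduct, sq,
    Finset.sum_mul_sum]
  exact Finset.sum_congr rfl fun a _ => Finset.sum_congr rfl fun b _ => by ring

theorem linearIndependent_outerSelf_of_isUnit [Fintype κ] [DecidableEq κ] (v : κ → ι → R)
    (h : IsUnit (of fun i j => (v i ⬝ᵥ v j) ^ 2)) :
    LinearIndependent R fun i => outerSelf (v i) := by
  refine .of_comp (LinearMap.pi fun j => quadEval (v j)) ?_
  have hrows : (LinearMap.pi fun j => quadEval (v j)) ∘ (fun i => outerSelf (v i)) =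
      (of fun i j => (v i ⬝ᵥ v j) ^ 2).row := by
    ext i j
    exact quadEval_outerSelf _ _
  exact hrows ▸ linearIndependent_rows_of_isUnit h

theorem finrank_fun [StrongRankCondition R] :
    Module.finrank R (Sym2 ι → R) = Fintype.card ι * (Fintype.card ι + 1) / 2 := by
  rw [Module.finrank_fintype_fun_eq_card, Sym2.card, Nat.choose_two_right, Nat.add_sub_cancel,
    Nat.mul_comm]

end Sym2

section Equiangular

variable {n R : Type*} [DecidableEq n] [CommRing R]

theorem Matrix.posDef_one_sub_smul_one_add_smul_ones [Fintype n] [LinearOrder R]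
    [IsStrictOrderedRing R] [StarRing R] [StarOrderedRing R] {γ : R} (h0 : 0 ≤ γ) (h1 : γ < 1) :
    ((1 - γ) • (1 : Matrix n n R) + γ • of fun _ _ => 1).PosDef := by
  refine (PosDef.one.smul (sub_pos.2 h1)).add_posSemidef (PosSemidef.smul ?_ h0)
  simpa [vecMulVec] using posSemidef_vecMulVec_self_star (1 : n → R)

theorem sq_gram_eq_of_equiangular {ι : Type*} [Fintype ι] {v : n → ι → R} {γ : R}
    (hunit : ∀ i, v i ⬝ᵥ v i = 1) (hang : ∀ i j, i ≠ j → (v i ⬝ᵥ v j) ^ 2 = γ) :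
    (of fun i j => (v i ⬝ᵥ v j) ^ 2) = (1 - γ) • (1 : Matrix n n R) + γ • of fun _ _ => 1 := by
  ext i j
  by_cases hij : i = j
  · subst hij
    simp [hunit]
  · simp [hang i j hij, hij]

end Equiangular

/-- At most d(d+1)/2 real equiangular unit vectors with common angle β < 1. -/
theorem equiangular_lines_card_le
    {d k : ℕ} (v : Fin k → (Fin d → ℝ)) (β : ℝ)
    (hunit : ∀ i, v i ⬝ᵥ v i = 1)
    (hang : ∀ i j, i ≠ j → |v i ⬝ᵥ v j| = β)
    (hβ : β < 1) :
    k ≤ d * (d + 1) / 2 := by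
  -- `β ≥ 0` as soon as two vectors exist; `max β 0` also covers `k ≤ 1`.
  have hsq : ∀ i j, i ≠ j → (v i ⬝ᵥ v j) ^ 2 = max β 0 ^ 2 := fun i j hij => by
    rw [← sq_abs, hang i j hij, max_eq_left (hang i j hij ▸ abs_nonneg _)]
  have hγ : max β 0 ^ 2 < 1 := pow_lt_one₀ (le_max_right _ _) (max_lt hβ one_pos) two_ne_zero
  have hgram := posDef_one_sub_smul_one_add_smul_ones (n := Fin k) (sq_nonneg _) hγ
  rw [← sq_gram_eq_of_equiangular hunit hsq] at hgram
  have hli := Sym2.linearIndependent_outerSelf_of_isUnit v hgram.isUnit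
  simpa only [Fintype.card_fin, Sym2.finrank_fun] using hli.fintype_card_le_finrank
end

section
/- Let v_1, ..., v_{d(d+1)/2} be unit vectors in ℝ^d that are equiangular with common angle β < 1, and suppose the rank-one projections v_i v_iᵀ span the symmetric subspace S_d of M_d(ℂ). Then the vectors form a tight frame with frame constant (d+1)/2, i.e. Σ_{i=1}^{d(d+1)/2} v_i v_iᵀ = ((d+1)/2)·I_d. -/
open Matrix

/-- The symmetric subspace `S_d` of `M_d(ℂ)`: matrices `A` with `Aᵀ = A`. -/
noncomputable def symMatrices (d : ℕ) : Submodule ℂ (Matrix (Fin d) (Fin d) ℂ) where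
  carrier := {A : Matrix (Fin d) (Fin d) ℂ | Aᵀ = A}
  add_mem' := by
    intro a b ha hb
    simp only [Set.mem_setOf_eq, Matrix.transpose_add] at *
    rw [ha, hb]
  zero_mem' := by simp
  smul_mem' := by
    intro c A hA
    simp only [Set.mem_setOf_eq, Matrix.transpose_smul] at *
    rw [hA]

/-!
Write `P i = v i v iᵀ` and `S = ∑ i, P i`. Equiangularity makes `tr (P j S) = ∑ i ⟨v i, v j⟩²`
independent of `j`, say equal to `c`, so `X = S - c • 1` satisfies `tr (P j X) = 0` for every `j`.
Since the `P i` span a space containing `1`, `X` lies in their span, hence is orthogonal to itself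
for the trace form; being symmetric, `X = 0`. Taking traces then gives `c = (d + 1) / 2`.
-/

namespace Matrix

variable {n ι : Type*} [Fintype n]

theorem IsHermitian.eq_zero_of_mem_span_of_forall_trace_mul_eq_zero {R : Type*} [CommRing R]
    [PartialOrder R] [StarRing R] [StarOrderedRing R] [NoZeroDivisors R] {A : Matrix n n R}
    (hA : A.IsHermitian) {s : Set (Matrix n n R)} (hmem : A ∈ Submodule.span R s)
    (horth : ∀ B ∈ s, (B * A).trace = 0) : A = 0 := by
  have hker : Submodule.span R s ≤ LinearMap.ker (traceLinearMap n R R ∘ₗ LinearMap.mulRight R A) :=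
    Submodule.span_le.mpr horth
  rw [← trace_conjTranspose_mul_self_eq_zero_iff, hA.eq]
  exact hker hmem

open ComplexOrder in
theorem eq_zero_of_map_ofReal_mem_span_of_forall_trace_mul_eq_zero {X : Matrix n n ℝ}
    (hX : X.IsSymm) (P : ι → Matrix n n ℝ)
    (hmem : X.map Complex.ofReal ∈ Submodule.span ℂ (Set.range fun i => (P i).map Complex.ofReal))
    (horth : ∀ i, (P i * X).trace = 0) : X = 0 := by
  have hXC : (X.map Complex.ofReal).IsHermitian :=
    (isHermitian_iff_isSymm.mpr hX).map _ fun x => by simp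
  have := hXC.eq_zero_of_mem_span_of_forall_trace_mul_eq_zero hmem <| by
    rintro _ ⟨i, rfl⟩
    have h := AddMonoidHom.map_trace Complex.ofRealHom (P i * X)
    rw [horth i, map_zero, Matrix.map_mul] at h
    exact h.symm
  exact map_injective Complex.ofReal_injective (by simpa using this)

theorem sum_vecMulVec_self_eq_smul_one [DecidableEq n] [Fintype ι] (v : ι → n → ℝ) (c : ℝ)
    (hone : (1 : Matrix n n ℂ) ∈
      Submodule.span ℂ (Set.range fun i => (vecMulVec (v i) (v i)).map Complex.ofReal))
    (hc : ∀ j, ∑ i, (v i ⬝ᵥ v j) ^ 2 = c * (v j ⬝ᵥ v j)) :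
    ∑ i, vecMulVec (v i) (v i) = c • 1 := by
  rw [← sub_eq_zero]
  refine eq_zero_of_map_ofReal_mem_span_of_forall_trace_mul_eq_zero ?_
    (fun i => vecMulVec (v i) (v i)) ?_ fun j => ?_
  · refine IsSymm.ext fun a b => ?_
    simp [sum_apply, vecMulVec_apply, one_apply, mul_comm, eq_comm]
  · have hmap : (∑ i, vecMulVec (v i) (v i) - c • 1).map Complex.ofReal
        = ∑ i, (vecMulVec (v i) (v i)).map Complex.ofReal - (c : ℂ) • 1 := by
      ext a b
      simp [sum_apply, one_apply, apply_ite Complex.ofReal]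
    rw [hmap]
    exact sub_mem (sum_mem fun i _ => Submodule.subset_span ⟨i, rfl⟩) (Submodule.smul_mem _ _ hone)
  · simp only [mul_sub, Finset.mul_sum, Matrix.mul_smul, mul_one, trace_sub, trace_sum,
      trace_smul, vecMulVec_mul_vecMulVec, trace_vecMulVec, dotProduct_smul, smul_eq_mul]
    simp only [← sq, dotProduct_comm (v j), hc j, sub_self]

theorem sum_sq_dotProduct_eq_of_equiangular [Fintype ι] (v : ι → n → ℝ) (β : ℝ)
    (hunit : ∀ i, v i ⬝ᵥ v i = 1) (hang : ∀ i j, i ≠ j → |v i ⬝ᵥ v j| = β) (j : ι) :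
    ∑ i, (v i ⬝ᵥ v j) ^ 2 = 1 + (Fintype.card ι - 1) * β ^ 2 := by
  classical
  rw [← Finset.add_sum_erase _ _ (Finset.mem_univ j), hunit, one_pow,
    Finset.sum_congr rfl fun i hi => by rw [← sq_abs, hang i j (Finset.ne_of_mem_erase hi)],
    Finset.sum_const, Finset.card_erase_of_mem (Finset.mem_univ j), Finset.card_univ, nsmul_eq_mul,
    Nat.cast_pred (Fintype.card_pos_iff.mpr ⟨j⟩)]

theorem frame_constant_eq_of_sum_vecMulVec_self_eq_smul_one [DecidableEq n] [Nonempty n]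
    [Fintype ι] {v : ι → n → ℝ} {c : ℝ} (hunit : ∀ i, v i ⬝ᵥ v i = 1)
    (hframe : ∑ i, vecMulVec (v i) (v i) = c • 1) :
    c = Fintype.card ι / Fintype.card n := by
  have htrace := congrArg trace hframe
  simp only [trace_sum, trace_vecMulVec, hunit, Finset.sum_const, Finset.card_univ, nsmul_eq_mul,
    mul_one, trace_smul, trace_one, smul_eq_mul] at htrace
  rw [htrace, mul_div_cancel_right₀ _ (Nat.cast_ne_zero.mpr Fintype.card_ne_zero)]

end Matrix

theorem maximal_equiangular_lines_tight_frame_general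
    {d : ℕ} (v : Fin (d * (d + 1) / 2) → (Fin d → ℝ)) (β : ℝ)
    (hunit : ∀ i, v i ⬝ᵥ v i = 1)
    (hang : ∀ i j, i ≠ j → |v i ⬝ᵥ v j| = β)
    (hspan : Submodule.span ℂ
        (Set.range fun i => (Matrix.vecMulVec (v i) (v i)).map Complex.ofReal)
        = symMatrices d) :
    ∑ i, Matrix.vecMulVec (v i) (v i)
      = (((d : ℝ) + 1) / 2) • (1 : Matrix (Fin d) (Fin d) ℝ) := by
  have hframe := sum_vecMulVec_self_eq_smul_one v _ (hspan ▸ transpose_one) fun j => by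
    rw [hunit, mul_one]; exact sum_sq_dotProduct_eq_of_equiangular v β hunit hang j
  rcases eq_or_ne d 0 with rfl | hd
  · exact Subsingleton.elim _ _
  have : NeZero d := ⟨hd⟩
  rw [hframe, frame_constant_eq_of_sum_vecMulVec_self_eq_smul_one hunit hframe, Fintype.card_fin,
    Fintype.card_fin, Nat.cast_div (Nat.even_mul_succ_self d).two_dvd two_ne_zero]
  congr 1
  field_simp
  push_cast
  ring

/-- A maximal set of d(d+1)/2 real equiangular lines forms a tight frame:
Σ v_i v_iᵀ = ((d+1)/2) · I_d. -/
theorem maximal_equiangular_lines_tight_frame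
    {d : ℕ} (v : Fin (d * (d + 1) / 2) → (Fin d → ℝ)) (β : ℝ)
    (hunit : ∀ i, v i ⬝ᵥ v i = 1)
    (hang : ∀ i j, i ≠ j → |v i ⬝ᵥ v j| = β)
    (hβ : β < 1)
    (hspan : Submodule.span ℂ
        (Set.range fun i => (Matrix.vecMulVec (v i) (v i)).map Complex.ofReal)
        = symMatrices d) :
    ∑ i, Matrix.vecMulVec (v i) (v i)
      = (((d : ℝ) + 1) / 2) • (1 : Matrix (Fin d) (Fin d) ℝ) :=
  maximal_equiangular_lines_tight_frame_general v β hunit hang hspan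
end

section
/- Let v_1, ..., v_6 be unit vectors in ℝ³ that are equiangular with common angle β = 1/√5. Then there exists z ∈ ℂ with |z| = 1 such that the matrices U_i := I_3 − (1−z)·v_i v_iᵀ ∈ M_3(ℂ) are unitary and pairwise trace-orthogonal, i.e. tr(U_i* U_j) = 0 for all i ≠ j. -/
open Matrix

/-- The complex rank-one projection `v vᵀ` associated to a real vector `v`. -/
noncomputable def realProj {d : ℕ} (v : Fin d → ℝ) : Matrix (Fin d) (Fin d) ℂ :=
  (Matrix.vecMulVec v v).map Complex.ofReal

/-!
For a unit vector `v`, `P = v vᵀ` is a self-adjoint idempotent, so `1 - (1 - z) P` acts as `z` on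
`v` and as the identity on `v⊥`: it is unitary exactly when `|z| = 1`. Expanding,
`tr ((1 - (1 - z) Pᵢ)ᴴ (1 - (1 - z) Pⱼ)) = 3 - 2 (1 - Re z) + |1 - z|² ⟨vᵢ, vⱼ⟩²`, and with
`|1 - z|² = 2 (1 - Re z)` and `⟨vᵢ, vⱼ⟩² = 1/5` this is `(7 + 8 Re z) / 5`, which vanishes for
`z = (-7 + i √15) / 8`.
-/

theorem IsIdempotentElem.one_sub_smul_mul_one_sub_smul {R A : Type*} [CommRing R] [Ring A]
    [Algebra R A] {p : A} (hp : IsIdempotentElem p) (a b : R) :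
    (1 - a • p) * (1 - b • p) = 1 - (a + b - a * b) • p := by
  rw [sub_mul, mul_sub, mul_sub, one_mul, mul_one, one_mul, smul_mul_smul_comm, hp.eq,
    add_sub_assoc, add_smul, sub_smul]
  abel

theorem IsStarProjection.one_sub_smul_mem_unitary {R A : Type*} [CommRing R] [StarRing R]
    [Ring A] [StarRing A] [Algebra R A] [StarModule R A] {p : A} (hp : IsStarProjection p)
    {z : R} (hz : z ∈ unitary R) : 1 - (1 - z) • p ∈ unitary A := by
  have hstar : star (1 - (1 - z) • p) = 1 - (1 - star z) • p := by
    rw [star_sub, star_one, star_smul, hp.isSelfAdjoint.star_eq, star_sub, star_one]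
  have hcoef : (1 - z) + (1 - star z) - (1 - z) * (1 - star z) = 0 := by
    linear_combination -Unitary.star_mul_self_of_mem hz
  rw [Unitary.mem_iff, hstar, hp.isIdempotentElem.one_sub_smul_mul_one_sub_smul,
    hp.isIdempotentElem.one_sub_smul_mul_one_sub_smul, add_comm (1 - star z),
    mul_comm (1 - star z), hcoef]
  simp

theorem Matrix.trace_conjTranspose_one_sub_smul_mul_one_sub_smul {n R : Type*} [Fintype n]
    [DecidableEq n] [CommRing R] [StarRing R] {P : Matrix n n R} (hP : P.IsHermitian)
    (Q : Matrix n n R) (c : R) :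
    trace ((1 - c • P)ᴴ * (1 - c • Q)) =
      Fintype.card n - star c * trace P - c * trace Q + star c * c * trace (P * Q) := by
  rw [conjTranspose_sub, conjTranspose_one, conjTranspose_smul, hP.eq, sub_mul, mul_sub,
    mul_sub, one_mul, mul_one, one_mul, smul_mul_smul_comm]
  simp only [trace_sub, trace_smul, trace_one, smul_eq_mul]
  ring

theorem Matrix.trace_map_ofReal {n : Type*} [Fintype n] (M : Matrix n n ℝ) :
    trace (M.map Complex.ofReal) = ((trace M : ℝ) : ℂ) :=
  (AddMonoidHom.map_trace Complex.ofRealHom M).symm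

theorem realProj_mul_realProj {d : ℕ} (u w : Fin d → ℝ) :
    realProj u * realProj w = (vecMulVec u ((u ⬝ᵥ w) • w)).map Complex.ofReal := by
  rw [← vecMulVec_mul_vecMulVec]
  exact (Matrix.map_mul (f := Complex.ofRealHom)).symm

theorem isStarProjection_realProj {d : ℕ} {v : Fin d → ℝ} (hv : v ⬝ᵥ v = 1) :
    IsStarProjection (realProj v) where
  isIdempotentElem := by
    rw [IsIdempotentElem, realProj_mul_realProj, hv, one_smul, realProj]
  isSelfAdjoint := by
    ext i j
    simp [realProj, vecMulVec_apply, mul_comm]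

theorem trace_realProj {d : ℕ} (v : Fin d → ℝ) : trace (realProj v) = (v ⬝ᵥ v : ℝ) := by
  rw [realProj, trace_map_ofReal, trace_vecMulVec]

theorem trace_realProj_mul_realProj {d : ℕ} (u w : Fin d → ℝ) :
    trace (realProj u * realProj w) = ((u ⬝ᵥ w) ^ 2 : ℝ) := by
  rw [realProj_mul_realProj, trace_map_ofReal, trace_vecMulVec, dotProduct_smul, smul_eq_mul, sq]

/-- Bravyi–Smolin: from six equiangular unit vectors in ℝ³ with common
angle 1/√5, there is a unimodular z such that the matrices U_i = I₃ − (1−z) v_i v_iᵀ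
are unitary and pairwise trace-orthogonal. -/
theorem bravyi_smolin_unitaries
    (v : Fin 6 → (Fin 3 → ℝ))
    (hunit : ∀ i, v i ⬝ᵥ v i = 1)
    (hang : ∀ i j, i ≠ j → |v i ⬝ᵥ v j| = 1 / Real.sqrt 5) :
    ∃ z : ℂ, ‖z‖ = 1 ∧
      (∀ i, (1 - (1 - z) • realProj (v i)) ∈ Matrix.unitaryGroup (Fin 3) ℂ) ∧
      (∀ i j, i ≠ j →
        Matrix.trace ((1 - (1 - z) • realProj (v i))ᴴ * (1 - (1 - z) • realProj (v j))) = 0) := by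
  set z : ℂ := ⟨-7 / 8, √15 / 8⟩
  have hz : z ∈ unitary ℂ := by
    have h15 : √15 ^ 2 = 15 := Real.sq_sqrt (by norm_num)
    rw [Unitary.mem_iff_star_mul_self]
    simp only [Complex.ext_iff, Complex.star_def, Complex.mul_re, Complex.mul_im, Complex.conj_re,
      Complex.conj_im, Complex.one_re, Complex.one_im, z]
    exact ⟨by linear_combination (1 / 64 : ℝ) * h15, by ring⟩
  have hre : star z + z = -7 / 4 := by
    simp only [Complex.ext_iff, Complex.star_def, Complex.add_re, Complex.add_im, Complex.conj_re,
      Complex.conj_im, z]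
    norm_num
  refine ⟨z, CStarRing.norm_of_mem_unitary hz,
    fun i => (isStarProjection_realProj (hunit i)).one_sub_smul_mem_unitary hz, fun i j hij => ?_⟩
  have hsq : (v i ⬝ᵥ v j) ^ 2 = 1 / 5 := by
    rw [← sq_abs, hang i j hij, div_pow, one_pow, Real.sq_sqrt (by norm_num)]
  rw [trace_conjTranspose_one_sub_smul_mul_one_sub_smul
      (isStarProjection_realProj (hunit i)).isSelfAdjoint, trace_realProj, trace_realProj,
    trace_realProj_mul_realProj, hunit i, hunit j, hsq]
  simp only [Fintype.card_fin, star_sub, star_one]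
  push_cast
  linear_combination (1 / 5 : ℂ) * Unitary.star_mul_self_of_mem hz + (4 / 5 : ℂ) * hre
end

section
/- Let d be an odd positive integer and let U_1, ..., U_k ∈ M_d(ℂ) be matrices whose complex linear span equals the symmetric subspace S_d of M_d(ℂ). Then there is no unitary matrix V ∈ M_d(ℂ) with tr(U_i* V) = 0 for all i = 1, ..., k. Equivalently: for odd d, any matrix V that is trace-orthogonal to every symmetric matrix satisfies Vᵀ = −V, hence det V = 0, so V cannot be unitary. -/
/-
Trace-orthogonality to every symmetric matrix `A` forces `V` to be skew-symmetric: testing against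
`X + Xᵀ` gives `tr (X Vᵀ) = -tr (X V)` for all `X`. A skew-symmetric matrix of odd size has
`det V = det Vᵀ = (-1)ᵈ det V = -det V`, so `det V = 0`, which no unitary matrix satisfies.
-/

open Matrix

namespace Matrix

variable {n R : Type*} [Fintype n]

theorem trace_mul_eq_zero_of_mem_span [CommSemiring R] {s : Set (Matrix n n R)}
    {W : Matrix n n R} (h : ∀ A ∈ s, trace (A * W) = 0) {A : Matrix n n R}
    (hA : A ∈ Submodule.span R s) : trace (A * W) = 0 :=
  (Submodule.span_le (p := LinearMap.ker (traceLinearMap n R R ∘ₗ LinearMap.mulRight R W))).mpr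
    h hA

theorem transpose_eq_neg_of_trace_symm_mul_eq_zero [CommRing R] {W : Matrix n n R}
    (h : ∀ A : Matrix n n R, Aᵀ = A → trace (A * W) = 0) : Wᵀ = -W := by
  rw [ext_iff_trace_mul_left]
  intro X
  have hX := h (X + Xᵀ) (by rw [transpose_add, transpose_transpose, add_comm])
  have hXt : trace (Xᵀ * W) = trace (X * Wᵀ) := by
    rw [← trace_transpose, transpose_mul, transpose_transpose, trace_mul_comm]
  rw [add_mul, trace_add, hXt] at hX
  rw [mul_neg, trace_neg]
  linear_combination hX

theorem det_eq_zero_of_transpose_eq_neg [DecidableEq n] [CommRing R] [IsAddTorsionFree R]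
    (hn : Odd (Fintype.card n)) {W : Matrix n n R} (hW : Wᵀ = -W) : W.det = 0 :=
  self_eq_neg.mp <| calc
    W.det = Wᵀ.det := (det_transpose W).symm
    _ = -W.det := by rw [hW, det_neg, hn.neg_one_pow, neg_one_mul]

theorem trace_mul_conjTranspose_eq_zero_iff [CommSemiring R] [StarRing R] {A B : Matrix n n R} :
    trace (A * Bᴴ) = 0 ↔ trace (Aᴴ * B) = 0 := by
  rw [← conjTranspose_conjTranspose A, ← conjTranspose_mul, trace_conjTranspose, star_eq_zero,
    trace_mul_comm, conjTranspose_conjTranspose]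

end Matrix

/-- For odd d, if U_1, ..., U_k span the symmetric subspace of M_d(ℂ),
then no unitary V is trace-orthogonal to all of them. -/
theorem no_unitary_orthogonal_to_symmetric_span
    {d k : ℕ} (hd : Odd d) (U : Fin k → Matrix (Fin d) (Fin d) ℂ)
    (hspan : Submodule.span ℂ (Set.range U) = symMatrices d) :
    ¬ ∃ V : Matrix (Fin d) (Fin d) ℂ,
        V ∈ Matrix.unitaryGroup (Fin d) ℂ ∧ ∀ i, Matrix.trace ((U i)ᴴ * V) = 0 := by
  rintro ⟨V, hV, horth⟩
  have hsym : ∀ A : Matrix (Fin d) (Fin d) ℂ, Aᵀ = A → trace (A * Vᴴ) = 0 := by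
    intro A hA
    refine trace_mul_eq_zero_of_mem_span ?_ (hspan ▸ hA : A ∈ Submodule.span ℂ (Set.range U))
    rintro _ ⟨i, rfl⟩
    exact trace_mul_conjTranspose_eq_zero_iff.mpr (horth i)
  have hdet : Vᴴ.det = 0 := det_eq_zero_of_transpose_eq_neg (by rwa [Fintype.card_fin])
    (transpose_eq_neg_of_trace_symm_mul_eq_zero hsym)
  exact (UnitaryGroup.det_isUnit ⟨Vᴴ, Unitary.star_mem hV⟩).ne_zero hdet
end

section
/- Let r and d be positive integers. Then the inequality d(d+2)(d−1) ≤ 4r(d+1)(d−r) holds (as integers, where d−r may be negative) if and only if 2r − 1 ≤ d ≤ 2r + 1. -/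
/-- for positive integers r, d, the inequality
d(d+2)(d−1) ≤ 4r(d+1)(d−r) (as integers) holds iff 2r−1 ≤ d ≤ 2r+1. -/
theorem cubic_inequality_iff (r d : ℕ) (hr : 0 < r) (hd : 0 < d) :
    (d : ℤ) * ((d : ℤ) + 2) * ((d : ℤ) - 1)
        ≤ 4 * (r : ℤ) * ((d : ℤ) + 1) * ((d : ℤ) - (r : ℤ))
      ↔ (2 * (r : ℤ) - 1 ≤ (d : ℤ) ∧ (d : ℤ) ≤ 2 * (r : ℤ) + 1) := by
  have hd1 : (1 : ℤ) ≤ (d : ℤ) := by exact_mod_cast hd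
  set x : ℤ := (d : ℤ) - 2 * r with hx
  have id1 : 4 * (r : ℤ) * ((d : ℤ) + 1) * ((d : ℤ) - (r : ℤ)) - (d : ℤ) * ((d : ℤ) + 2) * ((d : ℤ) - 1) = 2 * (d : ℤ) - ((d : ℤ) + 1) * x ^ 2 := by rw [hx]; ring
  constructor
  · intro h
    have key : ((d : ℤ) + 1) * x ^ 2 ≤ 2 * d := by linarith
    have hx2 : x ^ 2 ≤ 1 := by nlinarith [sq_nonneg x]
    constructor
    · nlinarith [sq_nonneg (x + 1)]
    · nlinarith [sq_nonneg (x - 1)]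
  · rintro ⟨h1, h2⟩
    have hx1 : -1 ≤ x := by omega
    have hx2 : x ≤ 1 := by omega
    nlinarith [mul_nonneg (by linarith : (0:ℤ) ≤ 1 - x) (by linarith : (0:ℤ) ≤ 1 + x)]
end
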